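/- Let $p \geq 0$ and let $v_1, v_2 : \mathbb{R} \to \mathbb{R}$ be polynomials of degree at most $p$. Then there exists a constant $C > 0$ depending only on $p$ such that for every $h > 0$, $\int_0^h v_1(x)^2\,dx \leq C \Big( \int_{-h}^0 v_2(x)^2\,dx + \sum_{j=0}^{p} h^{2j+1} \big(v_1^{(j)}(0) - v_2^{(j)}(0)\big)^2 \Big)$. -/

import Mathlib

/-! Write `v₁ = v₂ + w`. The Taylor coefficients of the jump `w` at `0` are `w⁽ʲ⁾(0) / j!`, so
Cauchy–Schwarz bounds `∫₀ʰ w²` by `(p + 1) ∑ⱼ h^(2j+1) (w⁽ʲ⁾(0))²`. For `v₂`, both `∫₀¹ q²` and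
`∫₋₁⁰ q²` are continuous functions of the coefficient vector of `q`, homogeneous of degree two, and
the second is positive away from `0`; compactness of the unit sphere of the coefficient space gives
`∫₀¹ q² ≤ K ∫₋₁⁰ q²`, and the substitution `x ↦ h x` carries this to `[0, h]` and `[-h, 0]` with the
same `K`. Finally `(a + b)² ≤ 2a² + 2b²`. -/

open Polynomial MeasureTheory Metric Finset
open scoped Nat

theorem exists_le_mul_of_sq_homogeneous {E : Type*} [NormedAddCommGroup E] [NormedSpace ℝ E]
    [ProperSpace E] {f g : E → ℝ} (hf : Continuous f) (hg : Continuous g)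
    (hf_smul : ∀ (t : ℝ) (x : E), f (t • x) = t ^ 2 * f x)
    (hg_smul : ∀ (t : ℝ) (x : E), g (t • x) = t ^ 2 * g x)
    (hg_pos : ∀ x, x ≠ 0 → 0 < g x) :
    ∃ K > 0, ∀ x, f x ≤ K * g x := by
  have hg_pos_sphere : ∀ u ∈ sphere (0 : E) 1, 0 < g u := fun u hu =>
    hg_pos u (ne_zero_of_mem_unit_sphere ⟨u, hu⟩)
  obtain ⟨M, hM⟩ := (isCompact_sphere (0 : E) 1).bddAbove_image
    (hf.continuousOn.div hg.continuousOn fun u hu => (hg_pos_sphere u hu).ne')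
  refine ⟨max M 1, by positivity, fun x => ?_⟩
  rcases eq_or_ne x 0 with rfl | hx
  · have hf0 : f 0 = 0 := by simpa using hf_smul 0 0
    have hg0 : g 0 = 0 := by simpa using hg_smul 0 0
    simp [hf0, hg0]
  set u := ‖x‖⁻¹ • x
  have hu : u ∈ sphere (0 : E) 1 := by simp [u, norm_smul, hx]
  have hxu : x = ‖x‖ • u := by simp [u, smul_smul, hx]
  have hfu : f u ≤ max M 1 * g u := by
    have := hM ⟨u, hu, rfl⟩
    rw [Pi.div_apply, div_le_iff₀ (hg_pos_sphere u hu)] at this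
    exact this.trans (mul_le_mul_of_nonneg_right (le_max_left _ _) (hg_pos_sphere u hu).le)
  rw [hxu, hf_smul, hg_smul, mul_left_comm]
  exact mul_le_mul_of_nonneg_left hfu (sq_nonneg _)

theorem intervalIntegral.integral_add_sq_le {f g : ℝ → ℝ} (hf : Continuous f) (hg : Continuous g)
    {a b : ℝ} (hab : a ≤ b) :
    ∫ x in a..b, (f x + g x) ^ 2 ≤ 2 * ((∫ x in a..b, f x ^ 2) + ∫ x in a..b, g x ^ 2) := by
  have hf2 : IntervalIntegrable (fun x => f x ^ 2) volume a b := (hf.pow 2).intervalIntegrable _ _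
  have hg2 : IntervalIntegrable (fun x => g x ^ 2) volume a b := (hg.pow 2).intervalIntegrable _ _
  rw [← intervalIntegral.integral_add hf2 hg2, ← intervalIntegral.integral_const_mul]
  exact intervalIntegral.integral_mono_on hab (((hf.add hg).pow 2).intervalIntegrable _ _)
    ((hf2.add hg2).const_mul 2) fun x _ => add_sq_le

namespace Polynomial

theorem eval_zero_iterate_derivative {R : Type*} [Semiring R] (w : R[X]) (k : ℕ) :
    (derivative^[k] w).eval 0 = k ! * w.coeff k := by
  rw [← coeff_zero_eq_eval_zero, coeff_iterate_derivative]
  simp [Nat.descFactorial_self, nsmul_eq_mul]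

theorem eval_ofFn {R : Type*} [Semiring R] [DecidableEq R] {n : ℕ} (c : Fin n → R) (x : R) :
    (ofFn n c).eval x = ∑ i, c i * x ^ (i : ℕ) := by
  simp [ofFn_eq_sum_monomial, eval_finsetSum]

theorem integral_eval_sq_pos {q : ℝ[X]} (hq : q ≠ 0) {a b : ℝ} (hab : a < b) :
    0 < ∫ x in a..b, q.eval x ^ 2 := by
  obtain ⟨c, hc, hqc⟩ : ∃ c ∈ Set.Icc a b, q.eval c ≠ 0 := by
    by_contra! h
    exact hq (eq_zero_of_infinite_isRoot q ((Set.Icc_infinite hab).mono h))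
  exact intervalIntegral.integral_pos hab (by fun_prop) (fun x _ => sq_nonneg _)
    ⟨c, hc, by positivity⟩

theorem exists_integral_eval_sq_le (p : ℕ) (a b : ℝ) {c d : ℝ} (hcd : c < d) :
    ∃ K > 0, ∀ q : ℝ[X], q.natDegree ≤ p →
      ∫ x in a..b, q.eval x ^ 2 ≤ K * ∫ x in c..d, q.eval x ^ 2 := by
  have hcont (a b : ℝ) :
      Continuous fun v : Fin (p + 1) → ℝ => ∫ x in a..b, (ofFn (p + 1) v).eval x ^ 2 := by
    apply intervalIntegral.continuous_parametric_intervalIntegral_of_continuous'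
    simp only [eval_ofFn]
    fun_prop
  have hsmul (a b t : ℝ) (v : Fin (p + 1) → ℝ) :
      ∫ x in a..b, (ofFn (p + 1) (t • v)).eval x ^ 2 =
        t ^ 2 * ∫ x in a..b, (ofFn (p + 1) v).eval x ^ 2 := by
    simp only [map_smul, eval_smul, smul_eq_mul, mul_pow, intervalIntegral.integral_const_mul]
  obtain ⟨K, hK, hle⟩ := exists_le_mul_of_sq_homogeneous (hcont a b) (hcont c d)
    (hsmul a b) (hsmul c d)
    fun v hv => integral_eval_sq_pos ((map_ne_zero_iff _ (injective_ofFn _)).2 hv) hcd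
  refine ⟨K, hK, fun q hq => ?_⟩
  simpa [ofFn_comp_toFn_eq_id_of_natDegree_lt (Nat.lt_succ_of_le hq)] using hle (toFn (p + 1) q)

theorem exists_integral_eval_sq_le_scaled (p : ℕ) (a b : ℝ) {c d : ℝ} (hcd : c < d) :
    ∃ K > 0, ∀ q : ℝ[X], q.natDegree ≤ p → ∀ h : ℝ, 0 < h →
      ∫ x in h * a..h * b, q.eval x ^ 2 ≤ K * ∫ x in h * c..h * d, q.eval x ^ 2 := by
  obtain ⟨K, hK, hle⟩ := exists_integral_eval_sq_le p a b hcd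
  refine ⟨K, hK, fun q hq h hh => ?_⟩
  have hdeg : (q.comp (C h * X)).natDegree ≤ p :=
    natDegree_comp_le.trans <| by
      simpa using Nat.mul_le_mul hq ((natDegree_C_mul_le h X).trans natDegree_X_le)
  have hscale (a b : ℝ) :
      h * ∫ x in a..b, (q.comp (C h * X)).eval x ^ 2 = ∫ x in h * a..h * b, q.eval x ^ 2 := by
    simpa only [eval_comp, eval_mul, eval_C, eval_X, smul_eq_mul] using
      intervalIntegral.smul_integral_comp_mul_left (fun x => q.eval x ^ 2) h
  calc ∫ x in h * a..h * b, q.eval x ^ 2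
      = h * ∫ x in a..b, (q.comp (C h * X)).eval x ^ 2 := (hscale a b).symm
    _ ≤ h * (K * ∫ x in c..d, (q.comp (C h * X)).eval x ^ 2) :=
        mul_le_mul_of_nonneg_left (hle _ hdeg) hh.le
    _ = K * ∫ x in h * c..h * d, q.eval x ^ 2 := by rw [mul_left_comm, hscale]

theorem integral_eval_sq_le_sum_iterate_derivative {p : ℕ} {w : ℝ[X]} (hw : w.natDegree ≤ p)
    {h : ℝ} (hh : 0 ≤ h) :
    ∫ x in 0..h, w.eval x ^ 2 ≤
      (p + 1) * ∑ j ∈ range (p + 1), h ^ (2 * j + 1) * ((derivative^[j] w).eval 0) ^ 2 := by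
  have hpt (x : ℝ) :
      w.eval x ^ 2 ≤ (p + 1) * ∑ j ∈ range (p + 1), w.coeff j ^ 2 * x ^ (2 * j) := by
    rw [eval_eq_sum_range' (Nat.lt_succ_of_le hw)]
    refine (sq_sum_le_card_mul_sum_sq ..).trans_eq ?_
    simp [mul_pow, pow_mul']
  calc ∫ x in 0..h, w.eval x ^ 2
      ≤ ∫ x in 0..h, (p + 1) * ∑ j ∈ range (p + 1), w.coeff j ^ 2 * x ^ (2 * j) :=
        intervalIntegral.integral_mono_on hh ((by fun_prop : Continuous _).intervalIntegrable _ _)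
          ((by fun_prop : Continuous _).intervalIntegrable _ _) fun x _ => hpt x
    _ = (p + 1) * ∑ j ∈ range (p + 1), w.coeff j ^ 2 * (h ^ (2 * j + 1) / (2 * j + 1)) := by
        simp [intervalIntegral.integral_finsetSum, integral_pow]
    _ ≤ (p + 1) * ∑ j ∈ range (p + 1), h ^ (2 * j + 1) * ((derivative^[j] w).eval 0) ^ 2 := by
        refine mul_le_mul_of_nonneg_left (sum_le_sum fun j _ => ?_) (by positivity)
        rw [eval_zero_iterate_derivative]
        have hfac : (1 : ℝ) ≤ (j ! : ℝ) ^ 2 := one_le_pow₀ (by exact_mod_cast j.factorial_pos)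
        calc w.coeff j ^ 2 * (h ^ (2 * j + 1) / (2 * j + 1))
            ≤ h ^ (2 * j + 1) * (1 * w.coeff j ^ 2) := by
              rw [one_mul, mul_comm]
              gcongr
              exact div_le_self (by positivity) (by linarith [(j.cast_nonneg : (0 : ℝ) ≤ j)])
          _ ≤ h ^ (2 * j + 1) * (j ! * w.coeff j) ^ 2 := by
              rw [mul_pow]
              gcongr

end Polynomial

theorem stmt_1 (p : ℕ) :
    ∃ C > (0 : ℝ), ∀ v₁ v₂ : Polynomial ℝ, v₁.natDegree ≤ p → v₂.natDegree ≤ p →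
      ∀ h : ℝ, 0 < h →
        (∫ x in (0:ℝ)..h, (v₁.eval x) ^ 2) ≤
          C * ((∫ x in (-h)..(0:ℝ), (v₂.eval x) ^ 2) +
            ∑ j ∈ Finset.range (p + 1),
              h ^ (2 * j + 1) *
                ((Polynomial.derivative^[j] v₁).eval 0 -
                  (Polynomial.derivative^[j] v₂).eval 0) ^ 2) := by
  obtain ⟨K, hK, hcompare⟩ :=
    exists_integral_eval_sq_le_scaled p 0 1 (c := -1) (d := 0) (by norm_num)
  refine ⟨2 * K + 2 * (p + 1), by positivity, fun v₁ v₂ hd₁ hd₂ h hh => ?_⟩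
  set X := ∫ x in (-h)..(0:ℝ), (v₂.eval x) ^ 2
  set S := ∑ j ∈ Finset.range (p + 1), h ^ (2 * j + 1) *
    ((derivative^[j] v₁).eval 0 - (derivative^[j] v₂).eval 0) ^ 2
  have hX : 0 ≤ X := intervalIntegral.integral_nonneg (by linarith) fun x _ => sq_nonneg _
  have hS : 0 ≤ S := sum_nonneg fun j _ => by positivity
  have hv₂ : ∫ x in 0..h, v₂.eval x ^ 2 ≤ K * X := by simpa using hcompare v₂ hd₂ h hh
  have hjump : ∫ x in 0..h, (v₁ - v₂).eval x ^ 2 ≤ (p + 1) * S := by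
    simpa only [iterate_derivative_sub, eval_sub] using integral_eval_sq_le_sum_iterate_derivative
      ((natDegree_sub_le _ _).trans (max_le hd₁ hd₂)) hh.le
  calc ∫ x in 0..h, v₁.eval x ^ 2
      = ∫ x in 0..h, (v₂.eval x + (v₁ - v₂).eval x) ^ 2 := by simp
    _ ≤ 2 * ((∫ x in 0..h, v₂.eval x ^ 2) + ∫ x in 0..h, (v₁ - v₂).eval x ^ 2) :=
        intervalIntegral.integral_add_sq_le v₂.continuous (v₁ - v₂).continuous hh.le
    _ ≤ 2 * (K * X + (p + 1) * S) := by gcongr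
    _ ≤ (2 * K + 2 * (p + 1)) * (X + S) := by
        nlinarith [mul_nonneg hK.le hS, mul_nonneg (by positivity : (0 : ℝ) ≤ p + 1) hX]
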